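/- Suppose u₀ ∈ C(Ω) satisfies F(u₀) < +∞ and F(u₀) ≤ F(u) for all u ∈ C(Ω). Then u₀ coincides on Ω with the supremum of its affine supports taken at points of Ω₋: for every x ∈ Ω, u₀(x) = sup{ℓ(x) : ℓ : ℝⁿ → ℝ affine with ℓ ≤ u₀ on cl(Ω) and ℓ(z) = u₀(z) for some z ∈ Ω₋}. -/

import Mathlib

/-!
Let `w` be the supremum of the affine supports of `u₀` touching it on `Ω₋`, and let `v` be `w`
on `Ω` and `u₀` elsewhere. Since `w ≤ u₀` is convex, `v` is convex on `cl Ω`; it has the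
boundary values of `u₀`, and it agrees with `u₀` on `Ω₋` because a convex function has a
support at every interior point. Hence `B(v) μ ≤ B(u₀) μ` on `Ω` (equality on `Ω₋`; on `Ω₊`
use `v ≤ u₀` and `μ ≥ 0`), so minimality forces `B(v) μ = B(u₀) μ` almost everywhere. As
`μ ≠ 0` a.e. and `B` is injective, `v = u₀` a.e. on `Ω`, hence everywhere on `Ω` by
continuity, i.e. `u₀ = w` on `Ω`.
-/

open MeasureTheory RealInnerProductSpace
open scoped ENNReal Classical

noncomputable section

abbrev Euc (n : ℕ) := EuclideanSpace ℝ (Fin n)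

/-- A set `S ⊆ ℝⁿ` has Lipschitz boundary: near each boundary point, after choosing
a unit direction `e`, `S` is the subgraph of a Lipschitz function on `e^⊥`. -/
def HasLipschitzBoundary {n : ℕ} (S : Set (Euc n)) : Prop :=
  ∀ z ∈ frontier S, ∃ (e : Euc n) (f : Euc n → ℝ) (K : NNReal) (ρ : ℝ),
    ‖e‖ = 1 ∧ 0 < ρ ∧ LipschitzWith K f ∧
    ∀ x ∈ Metric.ball z ρ, (x ∈ S ↔ ⟪e, x⟫ < f (x - ⟪e, x⟫ • e))

open Set Filter Topology

section Subgradient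

variable {E : Type*} [NormedAddCommGroup E] [InnerProductSpace ℝ E] [FiniteDimensional ℝ E]
  {s : Set E} {f : E → ℝ} {z : E}

lemma ConvexOn.exists_inner_le_interior (hf : ConvexOn ℝ s f) (hz : z ∈ interior s) :
    ∃ p : E, ∀ y ∈ interior s, f z + ⟪p, y - z⟫ ≤ f y := by
  set epi : Set (E × ℝ) := {q | q.1 ∈ interior s ∧ f q.1 < q.2}
  have hconv : Convex ℝ epi := (hf.subset interior_subset hf.1.interior).convex_strict_epigraph
  have hopen : IsOpen epi := by
    have hcont : ContinuousOn (fun q : E × ℝ => q.2 - f q.1) (interior s ×ˢ univ) :=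
      continuousOn_snd.sub (hf.continuousOn_interior.comp continuousOn_fst fun q hq => hq.1)
    convert hcont.isOpen_inter_preimage (isOpen_interior.prod isOpen_univ)
      (isOpen_Ioi (a := (0 : ℝ))) using 1
    ext q
    simp [epi, sub_pos]
  obtain ⟨φ, hφ⟩ := geometric_hahn_banach_open_point hconv hopen
    (show (z, f z) ∉ epi from fun h => lt_irrefl _ h.2)
  set ℓ : StrongDual ℝ E := φ.comp (ContinuousLinearMap.inl ℝ E ℝ)
  set β := φ (0, 1)
  have hsplit : ∀ y t, φ (y, t) = ℓ y + t * β := by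
    intro y t
    have : ((y, t) : E × ℝ) = (y, 0) + t • (0, 1) := by ext <;> simp
    rw [this, map_add, map_smul, smul_eq_mul]
    rfl
  have hβ : β < 0 := by
    have := hφ (z, f z + 1) ⟨hz, lt_add_one _⟩
    rw [hsplit, hsplit] at this
    linarith
  have hle : ∀ y ∈ interior s, φ (y, f y) ≤ φ (z, f z) := by
    intro y hy
    have hlim : Tendsto (fun t => φ (y, t)) (𝓝[>] f y) (𝓝 (φ (y, f y))) :=
      ((φ.continuous.comp (continuous_const.prodMk continuous_id)).tendsto _).mono_left
        nhdsWithin_le_nhds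
    exact le_of_tendsto hlim
      (eventually_nhdsWithin_of_forall fun t ht => (hφ (y, t) ⟨hy, ht⟩).le)
  refine ⟨(-β)⁻¹ • (InnerProductSpace.toDual ℝ E).symm ℓ, fun y hy => ?_⟩
  have h := hle y hy
  rw [hsplit, hsplit] at h
  rw [real_inner_smul_left, InnerProductSpace.toDual_symm_apply, map_sub]
  have : (-β)⁻¹ * (ℓ y - ℓ z) ≤ f y - f z :=
    (inv_mul_le_iff₀ (neg_pos.2 hβ)).2 (by linarith)
  linarith

lemma ConvexOn.exists_inner_le (hf : ConvexOn ℝ s f) (hz : z ∈ interior s) :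
    ∃ p : E, ∀ y ∈ s, f z + ⟪p, y - z⟫ ≤ f y := by
  obtain ⟨p, hp⟩ := hf.exists_inner_le_interior hz
  refine ⟨p, fun y hy => ?_⟩
  have hm : (1 / 2 : ℝ) • z + (1 / 2 : ℝ) • y ∈ interior s :=
    hf.1.combo_interior_self_mem_interior hz hy (by norm_num) (by norm_num) (by norm_num)
  have hconv :
      f ((1 / 2 : ℝ) • z + (1 / 2 : ℝ) • y) ≤ (1 / 2 : ℝ) • f z + (1 / 2 : ℝ) • f y :=
    hf.2 (interior_subset hz) hy (by norm_num) (by norm_num) (by norm_num)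
  have hsub : (1 / 2 : ℝ) • z + (1 / 2 : ℝ) • y - z = (1 / 2 : ℝ) • (y - z) := by module
  have := hp _ hm
  rw [hsub, real_inner_smul_right] at this
  simp only [smul_eq_mul] at hconv
  linarith

end Subgradient

section SupportEnvelope

variable {E : Type*} [NormedAddCommGroup E] [InnerProductSpace ℝ E]
  {s T : Set E} {u : E → ℝ} {x z : E}

def supportValues (s T : Set E) (u : E → ℝ) (x : E) : Set ℝ :=
  {t | ∃ (p : E) (c : ℝ), (∀ z ∈ s, ⟪p, z⟫ + c ≤ u z) ∧ (∃ z ∈ T, ⟪p, z⟫ + c = u z) ∧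
    t = ⟪p, x⟫ + c}

def supportEnvelope (s T : Set E) (u : E → ℝ) (x : E) : ℝ :=
  sSup (supportValues s T u x)

lemma add_inner_sub_mem_supportValues {p : E} (hp : ∀ y ∈ s, u z + ⟪p, y - z⟫ ≤ u y)
    (hz : z ∈ T) (x : E) : u z + ⟪p, x - z⟫ ∈ supportValues s T u x := by
  refine ⟨p, u z - ⟪p, z⟫, fun y hy => ?_, ⟨z, hz, by ring⟩, by rw [inner_sub_right]; ring⟩
  have := hp y hy
  rw [inner_sub_right] at this
  linarith

lemma supportValues_nonempty [FiniteDimensional ℝ E] (hu : ConvexOn ℝ s u)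
    (hT : T ⊆ interior s) (hTne : T.Nonempty) (x : E) : (supportValues s T u x).Nonempty := by
  obtain ⟨z, hz⟩ := hTne
  obtain ⟨p, hp⟩ := hu.exists_inner_le (hT hz)
  exact ⟨_, add_inner_sub_mem_supportValues hp hz x⟩

lemma le_of_mem_supportValues {t : ℝ} (hx : x ∈ s) (ht : t ∈ supportValues s T u x) :
    t ≤ u x := by
  obtain ⟨p, c, hle, -, rfl⟩ := ht
  exact hle x hx

lemma bddAbove_supportValues (hx : x ∈ s) : BddAbove (supportValues s T u x) :=
  ⟨u x, fun _ => le_of_mem_supportValues hx⟩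

lemma supportEnvelope_le (hne : (supportValues s T u x).Nonempty) (hx : x ∈ s) :
    supportEnvelope s T u x ≤ u x :=
  csSup_le hne fun _ => le_of_mem_supportValues hx

lemma isLUB_supportEnvelope (hne : (supportValues s T u x).Nonempty) (hx : x ∈ s) :
    IsLUB (supportValues s T u x) (supportEnvelope s T u x) :=
  isLUB_csSup hne (bddAbove_supportValues hx)

lemma supportEnvelope_eq_of_mem [FiniteDimensional ℝ E] (hu : ConvexOn ℝ s u)
    (hT : T ⊆ interior s) (hz : z ∈ T) : supportEnvelope s T u z = u z := by
  obtain ⟨p, hp⟩ := hu.exists_inner_le (hT hz)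
  have hmem := add_inner_sub_mem_supportValues hp hz z
  rw [sub_self, inner_zero_right, add_zero] at hmem
  exact le_antisymm (supportEnvelope_le ⟨_, hmem⟩ (interior_subset (hT hz)))
    (le_csSup (bddAbove_supportValues (interior_subset (hT hz))) hmem)

lemma convexOn_supportEnvelope (hs : Convex ℝ s)
    (hne : ∀ x, (supportValues s T u x).Nonempty) :
    ConvexOn ℝ s (supportEnvelope s T u) := by
  refine ⟨hs, fun y₁ h₁ y₂ h₂ a b ha hb hab => csSup_le (hne _) ?_⟩
  rintro _ ⟨p, c, hle, htouch, rfl⟩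
  have hval : ∀ y ∈ s, ⟪p, y⟫ + c ≤ supportEnvelope s T u y := fun y hy =>
    le_csSup (bddAbove_supportValues hy) ⟨p, c, hle, htouch, rfl⟩
  have hcomb : ⟪p, a • y₁ + b • y₂⟫ + c = a • (⟪p, y₁⟫ + c) + b • (⟪p, y₂⟫ + c) := by
    rw [inner_add_right, real_inner_smul_right, real_inner_smul_right, smul_eq_mul,
      smul_eq_mul]
    linear_combination c * hab.symm
  rw [hcomb]
  exact add_le_add (smul_le_smul_of_nonneg_left (hval y₁ h₁) ha)
    (smul_le_smul_of_nonneg_left (hval y₂ h₂) hb)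

end SupportEnvelope

lemma ConvexOn.piecewise_interior {E : Type*} [NormedAddCommGroup E] [NormedSpace ℝ E]
    {s : Set E} {w u : E → ℝ} (hw : ConvexOn ℝ s w) (hu : ConvexOn ℝ s u)
    (hwu : ∀ x ∈ s, w x ≤ u x) : ConvexOn ℝ s ((interior s).piecewise w u) := by
  refine ⟨hu.1, fun y₁ h₁ y₂ h₂ a b ha hb hab => ?_⟩
  by_cases hc : a • y₁ + b • y₂ ∈ interior s
  · have hwv : ∀ x ∈ s, w x ≤ (interior s).piecewise w u x := fun x hx => by
      by_cases h : x ∈ interior s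
      · simp [piecewise_eq_of_mem _ _ _ h]
      · simp [piecewise_eq_of_notMem _ _ _ h, hwu x hx]
    rw [piecewise_eq_of_mem _ _ _ hc]
    exact (hw.2 h₁ h₂ ha hb hab).trans
      (add_le_add (smul_le_smul_of_nonneg_left (hwv y₁ h₁) ha)
        (smul_le_smul_of_nonneg_left (hwv y₂ h₂) hb))
  · -- a point of `interior s` with positive weight would pull the combination into `interior s`
    have e₁ : a • (interior s).piecewise w u y₁ = a • u y₁ := by
      rcases ha.eq_or_lt with rfl | ha'
      · simp
      · rw [piecewise_eq_of_notMem _ _ _ fun h =>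
          hc (hu.1.combo_interior_self_mem_interior h h₂ ha' hb hab)]
    have e₂ : b • (interior s).piecewise w u y₂ = b • u y₂ := by
      rcases hb.eq_or_lt with rfl | hb'
      · simp
      · rw [piecewise_eq_of_notMem _ _ _ fun h =>
          hc (hu.1.combo_self_interior_mem_interior h₁ h ha hb' hab)]
    rw [piecewise_eq_of_notMem _ _ _ hc, e₁, e₂]
    exact hu.2 h₁ h₂ ha hb hab

lemma Convex.interior_closure_eq_of_isOpen {E : Type*} [NormedAddCommGroup E] [NormedSpace ℝ E]
    {Ω : Set E} (hc : Convex ℝ Ω) (ho : IsOpen Ω) : interior (closure Ω) = Ω := by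
  rcases Ω.eq_empty_or_nonempty with rfl | hne
  · simp
  · rw [hc.interior_closure_eq_interior_of_nonempty_interior (by rwa [ho.interior_eq]),
      ho.interior_eq]

section SupportReplacement

variable {E : Type*} [NormedAddCommGroup E] [InnerProductSpace ℝ E]
  {Ω T : Set E} {u : E → ℝ} {x : E}

def supportReplacement (Ω T : Set E) (u : E → ℝ) : E → ℝ :=
  Ω.piecewise (supportEnvelope (closure Ω) T u) u

lemma supportValues_closure_nonempty [FiniteDimensional ℝ E] (hΩo : IsOpen Ω)
    (hΩc : Convex ℝ Ω) (hu : ConvexOn ℝ (closure Ω) u) (hT : T ⊆ Ω) (hTne : T.Nonempty) (x : E) :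
    (supportValues (closure Ω) T u x).Nonempty :=
  supportValues_nonempty hu (by rwa [hΩc.interior_closure_eq_of_isOpen hΩo]) hTne x

lemma convexOn_supportReplacement [FiniteDimensional ℝ E] (hΩo : IsOpen Ω)
    (hΩc : Convex ℝ Ω) (hu : ConvexOn ℝ (closure Ω) u) (hT : T ⊆ Ω) (hTne : T.Nonempty) :
    ConvexOn ℝ (closure Ω) (supportReplacement Ω T u) := by
  have hne := supportValues_closure_nonempty hΩo hΩc hu hT hTne
  have := (convexOn_supportEnvelope hΩc.closure hne).piecewise_interior hu
    fun x hx => supportEnvelope_le (hne x) hx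
  rwa [hΩc.interior_closure_eq_of_isOpen hΩo] at this

lemma supportReplacement_eq_of_notMem (hx : x ∉ Ω) : supportReplacement Ω T u x = u x :=
  piecewise_eq_of_notMem _ _ _ hx

lemma isLUB_supportReplacement [FiniteDimensional ℝ E] (hΩo : IsOpen Ω)
    (hΩc : Convex ℝ Ω) (hu : ConvexOn ℝ (closure Ω) u) (hT : T ⊆ Ω) (hTne : T.Nonempty)
    (hx : x ∈ Ω) :
    IsLUB (supportValues (closure Ω) T u x) (supportReplacement Ω T u x) := by
  rw [supportReplacement, piecewise_eq_of_mem _ _ _ hx]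
  exact isLUB_supportEnvelope (supportValues_closure_nonempty hΩo hΩc hu hT hTne x)
    (subset_closure hx)

lemma supportReplacement_le [FiniteDimensional ℝ E] (hΩo : IsOpen Ω)
    (hΩc : Convex ℝ Ω) (hu : ConvexOn ℝ (closure Ω) u) (hT : T ⊆ Ω) (hTne : T.Nonempty)
    (hx : x ∈ Ω) :
    supportReplacement Ω T u x ≤ u x :=
  (isLUB_supportReplacement hΩo hΩc hu hT hTne hx).2 fun _ =>
    le_of_mem_supportValues (subset_closure hx)

lemma supportReplacement_eq_of_mem [FiniteDimensional ℝ E] (hΩo : IsOpen Ω)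
    (hΩc : Convex ℝ Ω) (hu : ConvexOn ℝ (closure Ω) u) (hT : T ⊆ Ω) (hx : x ∈ T) :
    supportReplacement Ω T u x = u x := by
  rw [supportReplacement, piecewise_eq_of_mem _ _ _ (hT hx)]
  exact supportEnvelope_eq_of_mem hu (by rwa [hΩc.interior_closure_eq_of_isOpen hΩo]) hx

lemma mul_supportReplacement_le [FiniteDimensional ℝ E] {m : E → ℝ} {B : ℝ → ℝ}
    (hB : Monotone B) (hΩo : IsOpen Ω) (hΩc : Convex ℝ Ω) (hu : ConvexOn ℝ (closure Ω) u)
    (hTne : {x ∈ Ω | m x < 0}.Nonempty) (hx : x ∈ Ω) :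
    B (supportReplacement Ω {x ∈ Ω | m x < 0} u x) * m x ≤ B (u x) * m x := by
  rcases lt_or_ge (m x) 0 with hneg | hpos
  · rw [supportReplacement_eq_of_mem hΩo hΩc hu (sep_subset Ω _) ⟨hx, hneg⟩]
  · exact mul_le_mul_of_nonneg_right
      (hB (supportReplacement_le hΩo hΩc hu (sep_subset Ω _) hTne hx)) hpos

end SupportReplacement

section PosNegParts

variable {α : Type*} [MeasurableSpace α] {μ : Measure α} {f g : α → ℝ}

lemma lintegral_ofReal_ne_top_of_integrable_max (h : Integrable (fun x => max (f x) 0) μ) :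
    ∫⁻ x, ENNReal.ofReal (f x) ∂μ ≠ ⊤ := by
  simpa using h.lintegral_lt_top.ne

lemma integrable_of_lintegral_ofReal_ne_top (hf : AEStronglyMeasurable f μ)
    (hpos : ∫⁻ x, ENNReal.ofReal (f x) ∂μ ≠ ⊤)
    (hneg : Integrable (fun x => max (-f x) 0) μ) : Integrable f μ := by
  have hmax : Integrable (fun x => max (f x) 0) μ := by
    refine ⟨hf.sup aestronglyMeasurable_const, ?_⟩
    exact (hasFiniteIntegral_iff_ofReal (f := fun x => max (f x) 0)
      (ae_of_all _ fun x => le_max_right _ _)).2 (by simpa using hpos.lt_top)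
  exact (hmax.sub hneg).congr (ae_of_all _ fun x => max_zero_sub_max_neg_zero_eq_self (f x))

lemma coe_add_lintegral_ofReal_sub (a : ℝ) (hf : Integrable f μ) :
    (a : EReal) + ((∫⁻ x, ENNReal.ofReal (f x) ∂μ : ℝ≥0∞) : EReal)
      - ((∫⁻ x, ENNReal.ofReal (-f x) ∂μ : ℝ≥0∞) : EReal)
      = ((a + ∫ x, f x ∂μ : ℝ) : EReal) := by
  rw [integral_eq_lintegral_pos_part_sub_lintegral_neg_part hf,
    ← EReal.coe_ennreal_toReal hf.lintegral_lt_top.ne,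
    ← EReal.coe_ennreal_toReal (by simpa using hf.neg.lintegral_lt_top.ne)]
  norm_cast
  ring

lemma lintegral_ofReal_ne_top_of_coe_add_sub_lt_top {a : ℝ}
    (hneg : Integrable (fun x => max (-f x) 0) μ)
    (h : (a : EReal) + ((∫⁻ x, ENNReal.ofReal (f x) ∂μ : ℝ≥0∞) : EReal)
      - ((∫⁻ x, ENNReal.ofReal (-f x) ∂μ : ℝ≥0∞) : EReal) < ⊤) :
    ∫⁻ x, ENNReal.ofReal (f x) ∂μ ≠ ⊤ := by
  intro htop
  rw [htop, ← EReal.coe_ennreal_toReal (lintegral_ofReal_ne_top_of_integrable_max hneg)] at h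
  simp at h

lemma ae_eq_of_ae_le_of_coe_add_lintegral_sub_le (a : ℝ) (hf : AEStronglyMeasurable f μ)
    (hg : AEStronglyMeasurable g μ) (hgf : g ≤ᵐ[μ] f)
    (hf_pos : ∫⁻ x, ENNReal.ofReal (f x) ∂μ ≠ ⊤)
    (hg_neg : Integrable (fun x => max (-g x) 0) μ)
    (h : (a : EReal) + ((∫⁻ x, ENNReal.ofReal (f x) ∂μ : ℝ≥0∞) : EReal)
        - ((∫⁻ x, ENNReal.ofReal (-f x) ∂μ : ℝ≥0∞) : EReal)
      ≤ (a : EReal) + ((∫⁻ x, ENNReal.ofReal (g x) ∂μ : ℝ≥0∞) : EReal)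
        - ((∫⁻ x, ENNReal.ofReal (-g x) ∂μ : ℝ≥0∞) : EReal)) :
    g =ᵐ[μ] f := by
  have hfi : Integrable f μ := by
    refine integrable_of_lintegral_ofReal_ne_top hf hf_pos
      (hg_neg.mono' (hf.neg.sup aestronglyMeasurable_const) ?_)
    filter_upwards [hgf] with x hx
    rw [Real.norm_of_nonneg (le_max_right _ _)]
    exact max_le_max (neg_le_neg hx) le_rfl
  have hgi : Integrable g μ := integrable_of_lintegral_ofReal_ne_top hg
    (ne_top_of_le_ne_top hf_pos
      (lintegral_mono_ae (hgf.mono fun x hx => ENNReal.ofReal_le_ofReal hx))) hg_neg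
  rw [coe_add_lintegral_ofReal_sub a hfi, coe_add_lintegral_ofReal_sub a hgi,
    EReal.coe_le_coe_iff] at h
  exact (integral_eq_iff_of_ae_le hgi hfi hgf).1
    (le_antisymm (integral_mono_ae hgi hfi hgf) (by linarith))

end PosNegParts

lemma eqOn_of_mul_le_of_coe_add_lintegral_sub_le {X : Type*} [TopologicalSpace X]
    [MeasurableSpace X] [OpensMeasurableSpace X] {μ : Measure X} [μ.IsOpenPosMeasure]
    {U : Set X} (hU : IsOpen U) {B : ℝ → ℝ} (hB : StrictMono B) {m u v : X → ℝ}
    (hm : ContinuousOn m U) (hm₀ : μ {x ∈ U | m x = 0} = 0) (hu : ContinuousOn u U)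
    (hv : ContinuousOn v U)
    (hle : ∀ x ∈ U, B (v x) * m x ≤ B (u x) * m x)
    (hu_pos : ∫⁻ x in U, ENNReal.ofReal (B (u x) * m x) ∂μ ≠ ⊤)
    (hv_neg : IntegrableOn (fun x => max (-(B (v x) * m x)) 0) U μ) (a : ℝ)
    (h : (a : EReal) + ((∫⁻ x in U, ENNReal.ofReal (B (u x) * m x) ∂μ : ℝ≥0∞) : EReal)
        - ((∫⁻ x in U, ENNReal.ofReal (-(B (u x) * m x)) ∂μ : ℝ≥0∞) : EReal)
      ≤ (a : EReal) + ((∫⁻ x in U, ENNReal.ofReal (B (v x) * m x) ∂μ : ℝ≥0∞) : EReal)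
        - ((∫⁻ x in U, ENNReal.ofReal (-(B (v x) * m x)) ∂μ : ℝ≥0∞) : EReal)) :
    EqOn v u U := by
  have hmeas : ∀ w, ContinuousOn w U →
      AEStronglyMeasurable (fun x => B (w x) * m x) (μ.restrict U) := fun w hw =>
    ((hB.monotone.measurable.comp_aemeasurable (hw.aemeasurable hU.measurableSet)).mul
      (hm.aemeasurable hU.measurableSet)).aestronglyMeasurable
  have hae := ae_eq_of_ae_le_of_coe_add_lintegral_sub_le a (hmeas u hu) (hmeas v hv)
    ((ae_restrict_iff' hU.measurableSet).2 (ae_of_all _ hle)) hu_pos hv_neg h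
  have hm' : ∀ᵐ x ∂μ.restrict U, m x ≠ 0 :=
    (ae_restrict_iff' hU.measurableSet).2
      (ae_iff.2 (measure_mono_null (fun x hx => by simpa using hx) hm₀))
  refine Measure.eqOn_open_of_ae_eq (μ := μ) ?_ hU hv hu
  filter_upwards [hae, hm'] with x hx hmx
  exact hB.injective (mul_right_cancel₀ hmx hx)

theorem stmt6_general (n : ℕ) (Ω : Set (Euc n))
    (hΩopen : IsOpen Ω) (hΩconv : Convex ℝ Ω)
    (σm : Measure (Euc n))
    (μf : Euc n → ℝ) (hμcont : ContinuousOn μf (closure Ω))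
    (hne : {x ∈ Ω | μf x < 0}.Nonempty)
    (hzero : volume {x ∈ Ω | μf x = 0} = 0)
    (A B : ℝ → ℝ) (hBmono : StrictMono B)
    (CΩ : Set (Euc n → ℝ))
    (hCΩ : CΩ = {u | ConvexOn ℝ (closure Ω) u ∧
      IntegrableOn (fun x => |A (u x)|) (frontier Ω) σm})
    (hnegpart : ∀ u ∈ CΩ, IntegrableOn (fun x => max (-(B (u x) * μf x)) 0) Ω volume)
    (F : (Euc n → ℝ) → EReal)
    (hF : ∀ u, F u = ((∫ x in frontier Ω, A (u x) ∂σm : ℝ) : EReal)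
        + ((∫⁻ x in Ω, ENNReal.ofReal (B (u x) * μf x)) : ℝ≥0∞)
        - ((∫⁻ x in Ω, ENNReal.ofReal (-(B (u x) * μf x))) : ℝ≥0∞))
    (u₀ : Euc n → ℝ) (hu₀ : u₀ ∈ CΩ) (hfin : F u₀ < ⊤)
    (hmin : ∀ u ∈ CΩ, F u₀ ≤ F u) :
    ∀ x ∈ Ω,
      IsLUB {t : ℝ | ∃ (p : Euc n) (c : ℝ),
          (∀ z ∈ closure Ω, ⟪p, z⟫ + c ≤ u₀ z) ∧
          (∃ z ∈ {x ∈ Ω | μf x < 0}, ⟪p, z⟫ + c = u₀ z) ∧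
          t = ⟪p, x⟫ + c}
        (u₀ x) := by
  subst hCΩ
  obtain ⟨hu₀conv, hu₀A⟩ := id hu₀
  set v := supportReplacement Ω {x ∈ Ω | μf x < 0} u₀
  have hvconv := convexOn_supportReplacement hΩopen hΩconv hu₀conv (sep_subset Ω _) hne
  have hbdry : EqOn v u₀ (frontier Ω) := fun x hx =>
    supportReplacement_eq_of_notMem (hΩopen.frontier_eq ▸ hx).2
  have hv : v ∈ {u | ConvexOn ℝ (closure Ω) u ∧
      IntegrableOn (fun x => |A (u x)|) (frontier Ω) σm} :=
    ⟨hvconv, hu₀A.congr_fun (fun x hx => by simp only [hbdry hx])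
      isClosed_frontier.measurableSet⟩
  have hcmp := hmin v hv
  rw [hF, hF, setIntegral_congr_fun isClosed_frontier.measurableSet
    (fun x hx => congrArg A (hbdry hx) : EqOn (fun x => A (v x)) (fun x => A (u₀ x)) _)] at hcmp
  rw [hF] at hfin
  have hcont : ∀ u, ConvexOn ℝ (closure Ω) u → ContinuousOn u Ω := fun u hu =>
    (hu.subset subset_closure hΩconv).continuousOn hΩopen
  have hEq : EqOn v u₀ Ω := eqOn_of_mul_le_of_coe_add_lintegral_sub_le hΩopen hBmono
    (hμcont.mono subset_closure) hzero (hcont u₀ hu₀conv) (hcont v hvconv)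
    (fun x hx => mul_supportReplacement_le hBmono.monotone hΩopen hΩconv hu₀conv hne hx)
    (lintegral_ofReal_ne_top_of_coe_add_sub_lt_top (hnegpart u₀ hu₀) hfin) (hnegpart v hv) _
    hcmp
  intro x hx
  rw [← hEq hx]
  exact isLUB_supportReplacement hΩopen hΩconv hu₀conv (sep_subset Ω _) hne hx

/-- In the setting of the minimization problem for
`F(u) = ∫_{∂Ω} A(u) dσ + ∫_Ω B(u) μ dx`, a minimizer `u₀ ∈ C(Ω)` coincides on `Ω` with
the supremum of its affine supports touching at points of `Ω₋`: for every `x ∈ Ω`,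
`u₀(x)` is the supremum of `ℓ(x)` over all affine `ℓ ≤ u₀` on `cl(Ω)` with
`ℓ(z) = u₀(z)` for some `z ∈ Ω₋`. -/
theorem stmt6 (n : ℕ) (Ω : Set (Euc n))
    (hΩopen : IsOpen Ω) (hΩbdd : Bornology.IsBounded Ω) (hΩconv : Convex ℝ Ω)
    (σm : Measure (Euc n)) [IsFiniteMeasure σm] (hσsupp : σm (frontier Ω)ᶜ = 0)
    (μf : Euc n → ℝ) (hμcont : ContinuousOn μf (closure Ω))
    (hne : {x ∈ Ω | μf x < 0}.Nonempty)
    (hLip : ∀ x ∈ {x ∈ Ω | μf x < 0},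
      HasLipschitzBoundary (connectedComponentIn {x ∈ Ω | μf x < 0} x))
    (hzero : volume {x ∈ Ω | μf x = 0} = 0)
    (A B : ℝ → ℝ) (hAcont : Continuous A) (hAmono : Monotone A)
    (hBcont : Continuous B) (hBmono : StrictMono B)
    (CΩ : Set (Euc n → ℝ))
    (hCΩ : CΩ = {u | ConvexOn ℝ (closure Ω) u ∧
      IntegrableOn (fun x => |A (u x)|) (frontier Ω) σm})
    (hnegpart : ∀ u ∈ CΩ, IntegrableOn (fun x => max (-(B (u x) * μf x)) 0) Ω volume)
    (F : (Euc n → ℝ) → EReal)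
    (hF : ∀ u, F u = ((∫ x in frontier Ω, A (u x) ∂σm : ℝ) : EReal)
        + ((∫⁻ x in Ω, ENNReal.ofReal (B (u x) * μf x)) : ℝ≥0∞)
        - ((∫⁻ x in Ω, ENNReal.ofReal (-(B (u x) * μf x))) : ℝ≥0∞))
    (u₀ : Euc n → ℝ) (hu₀ : u₀ ∈ CΩ) (hfin : F u₀ < ⊤)
    (hmin : ∀ u ∈ CΩ, F u₀ ≤ F u) :
    ∀ x ∈ Ω,
      IsLUB {t : ℝ | ∃ (p : Euc n) (c : ℝ),
          (∀ z ∈ closure Ω, ⟪p, z⟫ + c ≤ u₀ z) ∧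
          (∃ z ∈ {x ∈ Ω | μf x < 0}, ⟪p, z⟫ + c = u₀ z) ∧
          t = ⟪p, x⟫ + c}
        (u₀ x) :=
  stmt6_general n Ω hΩopen hΩconv σm μf hμcont hne hzero A B hBmono CΩ hCΩ hnegpart F hF u₀ hu₀ hfin
    hmin
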